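/- Let t be a substring of T and let s ∈ S_t. Then there exist nonnegative integers a and b such that for every occurrence (l, r) ∈ occ_T(t) one has l − a ≥ 1, r + b ≤ n, and T[l − a, r + b] = s. -/

import Mathlib

/-- `frag T i j` is the fragment `T[i, j]` of `T` (1-indexed, inclusive). -/
def frag {α : Type*} (T : List α) (i j : ℕ) : List α := (T.drop (i - 1)).take (j - i + 1)

/-- `t` is a substring of `T`, i.e. `t = T[i, j]` for some `1 ≤ i ≤ j ≤ |T|`. -/
def IsSub {α : Type*} (T t : List α) : Prop :=
  ∃ i j : ℕ, 1 ≤ i ∧ i ≤ j ∧ j ≤ T.length ∧ frag T i j = t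

/-- `occ T t` is the set of occurrences of `t` in `T`: pairs `(i, j)` with
`1 ≤ i ≤ j ≤ |T|` and `T[i, j] = t`. -/
def occ {α : Type*} (T t : List α) : Set (ℕ × ℕ) :=
  {p | 1 ≤ p.1 ∧ p.1 ≤ p.2 ∧ p.2 ≤ T.length ∧ frag T p.1 p.2 = t}

/-- `Sset T t` is the set `S_t`: substrings `s` of `T` such that `t` occurs in `s`
and `|occ_T(t)| = |occ_T(s)|`. -/
def Sset {α : Type*} (T t : List α) : Set (List α) :=
  {s | IsSub T s ∧ (∃ a b : ℕ, 1 ≤ a ∧ a ≤ b ∧ b ≤ s.length ∧ frag s a b = t) ∧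
    (occ T t).ncard = (occ T s).ncard}

/-!
Fix an occurrence `s[a, b] = t`. Sending an occurrence `(i, j)` of `s` in `T` to the occurrence
`(i + a - 1, i + b - 1)` of `t` is injective, so by `|occ_T(t)| = |occ_T(s)|` it is onto. Hence
every occurrence of `t` sits at the same offsets `a - 1` and `|s| - b` inside an occurrence of `s`.
-/

section Fragments

variable {α : Type*}

theorem frag_length (T : List α) {i j : ℕ} (hi : 1 ≤ i) (hij : i ≤ j) (hj : j ≤ T.length) :
    (frag T i j).length = j - i + 1 := by
  simp only [frag, List.length_take, List.length_drop]
  omega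

theorem frag_frag (T : List α) (i j : ℕ) {a b : ℕ} (hi : 1 ≤ i) (ha : 1 ≤ a) (hab : a ≤ b)
    (hb : b ≤ j - i + 1) :
    frag (frag T i j) a b = frag T (i + a - 1) (i + b - 1) := by
  unfold frag
  rw [List.drop_take, List.take_take, List.drop_drop]
  congr 1
  · rw [Nat.min_eq_left (by omega)]
    omega
  · congr 1
    omega

theorem occ_finite (T s : List α) : (occ T s).Finite := by
  refine (Set.finite_Icc ((1 : ℕ), (1 : ℕ)) (T.length, T.length)).subset ?_
  rintro ⟨i, j⟩ ⟨h1, h2, h3, -⟩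
  exact ⟨⟨h1, h1.trans h2⟩, ⟨h2.trans h3, h3⟩⟩

theorem snd_eq_of_mem_occ {T s : List α} {p : ℕ × ℕ} (hp : p ∈ occ T s) :
    p.2 = p.1 + s.length - 1 := by
  obtain ⟨h1, h2, h3, rfl⟩ := hp
  rw [frag_length T h1 h2 h3]
  omega

/-- The position of the occurrence `s[a, b]` of `t` inside the occurrence `p` of `s`. -/
def innerOcc (a b : ℕ) (p : ℕ × ℕ) : ℕ × ℕ := (p.1 + a - 1, p.1 + b - 1)

theorem mapsTo_innerOcc {T s t : List α} {a b : ℕ} (ha : 1 ≤ a) (hab : a ≤ b)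
    (hb : b ≤ s.length) (hst : frag s a b = t) :
    Set.MapsTo (innerOcc a b) (occ T s) (occ T t) := by
  rintro p hp
  have hlen := snd_eq_of_mem_occ hp
  obtain ⟨h1, h2, h3, rfl⟩ := hp
  simp only [occ, innerOcc, Set.mem_ofPred_eq]
  refine ⟨by omega, by omega, by omega, ?_⟩
  rw [← hst, frag_frag T p.1 p.2 h1 ha hab (by omega)]

theorem injOn_innerOcc {T s : List α} {a : ℕ} (b : ℕ) (ha : 1 ≤ a) :
    Set.InjOn (innerOcc a b) (occ T s) := by
  rintro p hp q hq hpq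
  have hfst : p.1 = q.1 := by
    have := congrArg Prod.fst hpq
    simp only [innerOcc] at this
    omega
  exact Prod.ext hfst (by rw [snd_eq_of_mem_occ hp, snd_eq_of_mem_occ hq, hfst])

end Fragments

theorem extOcc_general {α : Type*} (T t s : List α) (hs : s ∈ Sset T t) :
    ∃ a b : ℕ, ∀ p ∈ occ T t,
      1 ≤ p.1 - a ∧ p.2 + b ≤ T.length ∧ frag T (p.1 - a) (p.2 + b) = s := by
  obtain ⟨-, ⟨a, b, ha, hab, hb, hst⟩, hcard⟩ := hs
  have himage : innerOcc a b '' occ T s = occ T t := by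
    refine Set.eq_of_subset_of_ncard_le (mapsTo_innerOcc ha hab hb hst).image_subset ?_
      (occ_finite T t)
    rw [(injOn_innerOcc b ha).ncard_image, hcard]
  refine ⟨a - 1, s.length - b, ?_⟩
  rintro _ hp
  rw [← himage] at hp
  obtain ⟨p, hp, rfl⟩ := hp
  have hlen := snd_eq_of_mem_occ hp
  obtain ⟨h1, h2, h3, hps⟩ := hp
  have hstart : p.1 + a - 1 - (a - 1) = p.1 := by omega
  have hend : p.1 + b - 1 + (s.length - b) = p.2 := by omega
  simp only [innerOcc, hstart, hend]
  exact ⟨h1, h3, hps⟩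

/-- If `t` is a substring of `T` and `s ∈ S_t`, then there exist nonnegative integers
`a, b` such that for every occurrence `(l, r) ∈ occ_T(t)` we have `l - a ≥ 1`,
`r + b ≤ |T|`, and `T[l - a, r + b] = s`. -/
theorem extOcc {α : Type*} (T t s : List α) (ht : IsSub T t) (hs : s ∈ Sset T t) :
    ∃ a b : ℕ, ∀ p ∈ occ T t,
      1 ≤ p.1 - a ∧ p.2 + b ≤ T.length ∧ frag T (p.1 - a) (p.2 + b) = s :=
  extOcc_general T t s hs
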